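/- The function Δ is even and (2π)-periodic, it is increasing and bijective from [0, π] onto [0, 1], and for every ω ∈ ℝ one has Δ(ω) = tan( (π/4)·(1 − δ(ω, π + 2πℤ)/π) ) and Δ(ω) ≤ 1 − δ(ω, π + 2πℤ)/π. -/

import Mathlib

/-- The function `Δ(ω) = min(|tan(ω/4)|, |tan(ω/4)|⁻¹)`. -/
noncomputable def Dfun (ω : ℝ) : ℝ :=
  min |Real.tan (ω / 4)| |Real.tan (ω / 4)|⁻¹

/-!
`Δ` is even and `2π`-periodic, so `Δ ω = Δ ‖ω‖`, where `‖ω‖ ∈ [0, π]` is the norm of `ω` in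
`ℝ/2πℤ`, i.e. its distance to `2πℤ`. On `[0, π]` we have `tan (ω/4) ∈ [0, 1]`, hence
`Δ ω = tan (ω/4)` there, which is increasing and continuous from `0` to `1`. The distance from `ω`
to `π + 2πℤ` is `π - ‖ω‖`, which gives the closed formula; the bound is the chord inequality
`tan x ≤ 4x/π` on `[0, π/4]`, from convexity of `tan`.
-/

open Real Set Metric Function

theorem Function.Periodic.eq_apply_norm_coe_addCircle {α : Type*} {f : ℝ → α} {p : ℝ}
    (hper : Periodic f p) (heven : f.Even) (x : ℝ) : f x = f ‖(x : AddCircle p)‖ := by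
  rw [AddCircle.norm_eq]
  rcases abs_choice (x - round (p⁻¹ * x) * p) with h | h <;> rw [h]
  · exact (hper.sub_int_mul_eq _).symm
  · rw [heven, hper.sub_int_mul_eq]

theorem AddCircle.norm_mem_Icc {c : ℝ} (hc : 0 < c) (x : AddCircle (2 * c)) : ‖x‖ ∈ Icc 0 c := by
  simpa [abs_of_pos hc] using
    (⟨norm_nonneg x, norm_le_half_period (2 * c) (mul_pos two_pos hc).ne'⟩ : ‖x‖ ∈ Icc 0 _)

theorem AddCircle.norm_coe_sub_half_period {c : ℝ} (hc : 0 < c) (x : ℝ) :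
    ‖((x - c : ℝ) : AddCircle (2 * c))‖ = c - ‖(x : AddCircle (2 * c))‖ := by
  set g : ℝ → ℝ := fun x ↦ ‖((x - c : ℝ) : AddCircle (2 * c))‖
  have hper : Periodic g (2 * c) := fun x ↦ by
    simp only [g, add_sub_right_comm, AddCircle.coe_add_period]
  have heven : g.Even := fun x ↦ by
    simp only [g]
    rw [← norm_neg ((x - c : ℝ) : AddCircle (2 * c)), ← QuotientAddGroup.mk_neg,
      show -(x - c) = -x - c + 2 * c by ring, AddCircle.coe_add_period]
  have h2c : 0 < 2 * c := by positivity
  set n := ‖(x : AddCircle (2 * c))‖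
  obtain ⟨hn_nonneg, hn_le⟩ := AddCircle.norm_mem_Icc hc (x : AddCircle (2 * c))
  have habs : |n - c| ≤ |2 * c| / 2 := by
    rw [abs_of_pos h2c, abs_le]
    constructor <;> linarith
  calc g x = g n := hper.eq_apply_norm_coe_addCircle heven x
    _ = |n - c| := (AddCircle.norm_coe_eq_abs_iff _ h2c.ne').2 habs
    _ = c - n := by rw [abs_of_nonpos (by linarith)]; ring

theorem Metric.infDist_range_add_int_mul (p c x : ℝ) :
    infDist x (range fun k : ℤ => c + p * k) = ‖((x - c : ℝ) : AddCircle p)‖ := by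
  rw [QuotientAddGroup.norm_mk, ← infDist_image (IsometryEquiv.subRight c).isometry]
  congr 1
  ext y
  simp [AddSubgroup.mem_zmultiples_iff, eq_comm, mul_comm]

theorem Real.tan_add_pi_div_two (x : ℝ) : tan (x + π / 2) = -(tan x)⁻¹ := by
  rw [← tan_periodic.sub_eq, show x + π / 2 - π = -(π / 2 - x) by ring, tan_neg,
    tan_pi_div_two_sub]

theorem Real.strictMonoOn_tan_Icc : StrictMonoOn tan (Icc 0 (π / 4)) :=
  strictMonoOn_tan.mono fun _ hx ↦ ⟨by linarith [hx.1, pi_pos], by linarith [hx.2, pi_pos]⟩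

theorem Real.tan_mem_Icc_zero_one {x : ℝ} (hx : x ∈ Icc 0 (π / 4)) : tan x ∈ Icc 0 1 := by
  simpa using strictMonoOn_tan_Icc.monotoneOn.mapsTo_Icc hx

theorem Real.convexOn_tan : ConvexOn ℝ (Ico 0 (π / 2)) tan := by
  have hcos : ∀ x ∈ Ico 0 (π / 2), 0 < cos x := fun x hx ↦
    cos_pos_of_mem_Ioo ⟨by linarith [hx.1, pi_pos], hx.2⟩
  refine MonotoneOn.convexOn_of_deriv (convex_Ico _ _)
    (continuousOn_tan.mono fun x hx ↦ (hcos x hx).ne') ?_ ?_ <;> rw [interior_Ico]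
  · exact fun x hx ↦ (hasDerivAt_tan (hcos x (Ioo_subset_Ico_self hx)).ne').differentiableAt
      |>.differentiableWithinAt
  · intro x hx y hy hxy
    have hcos_le : cos y ≤ cos x :=
      cos_le_cos_of_nonneg_of_le_pi hx.1.le (by linarith [hy.2, pi_pos]) hxy
    have hcos_y := hcos y (Ioo_subset_Ico_self hy)
    simp only [deriv_tan]
    exact one_div_le_one_div_of_le (pow_pos hcos_y 2) (pow_le_pow_left₀ hcos_y.le hcos_le 2)

theorem Real.tan_le_div_mul_tan {t a : ℝ} (ht : 0 ≤ t) (hta : t ≤ a) (ha : a < π / 2) :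
    tan t ≤ t / a * tan a := by
  rcases ht.eq_or_lt with rfl | ht
  · simp
  have ha0 : 0 < a := ht.trans_le hta
  have h := convexOn_tan.2 (⟨le_rfl, by linarith⟩ : (0 : ℝ) ∈ Ico 0 (π / 2)) ⟨ha0.le, ha⟩
    (sub_nonneg.2 <| (div_le_one ha0).2 hta) (div_nonneg ht.le ha0.le) (sub_add_cancel 1 (t / a))
  simpa [div_mul_cancel₀ _ ha0.ne'] using h

theorem min_abs_abs_inv_of_mem_Icc {t : ℝ} (ht : t ∈ Icc 0 1) : min |t| |t|⁻¹ = t := by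
  rw [abs_of_nonneg ht.1]
  rcases ht.1.eq_or_lt with rfl | hpos
  · simp
  exact min_eq_left (ht.2.trans (one_le_inv₀ hpos |>.2 ht.2))

theorem Dfun_neg (ω : ℝ) : Dfun (-ω) = Dfun ω := by
  simp [Dfun, neg_div, tan_neg]

theorem Dfun_add_two_pi (ω : ℝ) : Dfun (ω + 2 * π) = Dfun ω := by
  rw [Dfun, show (ω + 2 * π) / 4 = ω / 4 + π / 2 by ring, tan_add_pi_div_two, abs_neg, abs_inv,
    inv_inv, min_comm, Dfun]

theorem Dfun_eqOn_tan : EqOn Dfun (fun ω ↦ tan (ω / 4)) (Icc 0 π) := fun ω hω ↦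
  min_abs_abs_inv_of_mem_Icc <| tan_mem_Icc_zero_one ⟨by linarith [hω.1], by linarith [hω.2]⟩

theorem strictMonoOn_Dfun : StrictMonoOn Dfun (Icc 0 π) := by
  refine (strictMonoOn_tan_Icc.comp (fun x _ y _ h ↦ by linarith) ?_).congr Dfun_eqOn_tan.symm
  exact fun ω hω ↦ ⟨by linarith [hω.1], by linarith [hω.2]⟩

theorem continuousOn_Dfun : ContinuousOn Dfun (Icc 0 π) := by
  refine ContinuousOn.congr ?_ Dfun_eqOn_tan
  refine continuousOn_tan.comp (by fun_prop) fun ω hω ↦ (cos_pos_of_mem_Ioo ?_).ne'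
  constructor <;> linarith [hω.1, hω.2, pi_pos]

theorem bijOn_Dfun : BijOn Dfun (Icc 0 π) (Icc 0 1) := by
  have h0 : Dfun 0 = 0 := by simp [Dfun]
  have hπ : Dfun π = 1 := (Dfun_eqOn_tan (right_mem_Icc.2 pi_pos.le)).trans tan_pi_div_four
  have h : BijOn Dfun (Icc 0 π) (Icc (Dfun 0) (Dfun π)) :=
    ⟨strictMonoOn_Dfun.monotoneOn.mapsTo_Icc, strictMonoOn_Dfun.injOn,
      continuousOn_Dfun.surjOn_Icc (left_mem_Icc.2 pi_pos.le) (right_mem_Icc.2 pi_pos.le)⟩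
  rwa [h0, hπ] at h

theorem Dfun_eq_tan_norm (ω : ℝ) : Dfun ω = tan (‖(ω : AddCircle (2 * π))‖ / 4) := by
  rw [Periodic.eq_apply_norm_coe_addCircle Dfun_add_two_pi Dfun_neg ω]
  exact Dfun_eqOn_tan (AddCircle.norm_mem_Icc pi_pos _)

theorem infDist_pi_add_two_pi_mul_int (ω : ℝ) :
    infDist ω (range fun k : ℤ => π + 2 * π * k) = π - ‖(ω : AddCircle (2 * π))‖ := by
  rw [infDist_range_add_int_mul, AddCircle.norm_coe_sub_half_period pi_pos]

theorem Dfun_eq_tan_infDist (ω : ℝ) :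
    Dfun ω = tan (π / 4 * (1 - infDist ω (range fun k : ℤ => π + 2 * π * k) / π)) := by
  rw [Dfun_eq_tan_norm, infDist_pi_add_two_pi_mul_int]
  congr 1
  field_simp
  ring

theorem Dfun_le_one_sub_infDist_div_pi (ω : ℝ) :
    Dfun ω ≤ 1 - infDist ω (range fun k : ℤ => π + 2 * π * k) / π := by
  obtain ⟨hn_nonneg, hn_le⟩ := AddCircle.norm_mem_Icc pi_pos (ω : AddCircle (2 * π))
  set n := ‖(ω : AddCircle (2 * π))‖
  calc Dfun ω = tan (n / 4) := Dfun_eq_tan_norm ω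
    _ ≤ n / 4 / (π / 4) * tan (π / 4) :=
      tan_le_div_mul_tan (by positivity) (by linarith) (by linarith [pi_pos])
    _ = 1 - infDist ω (range fun k : ℤ => π + 2 * π * k) / π := by
      rw [tan_pi_div_four, infDist_pi_add_two_pi_mul_int]
      field_simp
      ring

/-- `Δ` is even, `(2π)`-periodic, increasing and bijective from
`[0, π]` onto `[0, 1]`, with the explicit expression and bound in terms of the
distance to `π + 2πℤ`. -/
theorem Dfun_properties :
    (∀ ω : ℝ, Dfun (-ω) = Dfun ω) ∧
    (∀ ω : ℝ, Dfun (ω + 2 * Real.pi) = Dfun ω) ∧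
    StrictMonoOn Dfun (Set.Icc 0 Real.pi) ∧
    Set.BijOn Dfun (Set.Icc 0 Real.pi) (Set.Icc 0 1) ∧
    (∀ ω : ℝ, Dfun ω =
      Real.tan (Real.pi / 4 *
        (1 - Metric.infDist ω
            (Set.range fun k : ℤ => Real.pi + 2 * Real.pi * (k : ℝ)) / Real.pi))) ∧
    (∀ ω : ℝ, Dfun ω ≤
      1 - Metric.infDist ω
          (Set.range fun k : ℤ => Real.pi + 2 * Real.pi * (k : ℝ)) / Real.pi) :=
  ⟨Dfun_neg, Dfun_add_two_pi, strictMonoOn_Dfun, bijOn_Dfun, Dfun_eq_tan_infDist,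
    Dfun_le_one_sub_infDist_div_pi⟩
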